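/- arXiv:2404.01145 — 8 statements merged into one kernel-verified Lean document; each statement's English description precedes it below -/
import Mathlib

section
/- Suppose u, v : ℝ → H are differentiable on [0,T] with u'(t) = A(u t) + g t (u t) for all t ∈ [0,T], and suppose ‖v'(t) − A(v t) − g t (v t)‖ ≤ ε(t) for all t ∈ [0,T] (v is the solution of the continuous optimize-then-discretize dynamics for a right-hand side containing the dissipative operator A, with tangent-space projection error bounded by ε(t)). Then, with C₁ = C − λ, for all t ∈ [0,T]: ‖u(t) − v(t)‖ ≤ e^{C₁t} ( ‖u(0) − v(0)‖ + ∫₀ᵗ e^{−C₁s} ε(s) ds ). -/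
set_option maxHeartbeats 1000000 in
open Set intervalIntegral in
/-- A posteriori error bound for continuous OtD dynamics when the right-hand side
contains a dissipative (Laplacian-like) operator `A` plus a Lipschitz part `g`
(Proposition 3.2). -/
theorem otd_aposteriori_dissipative
    {H : Type*} [NormedAddCommGroup H] [InnerProductSpace ℝ H]
    (T C lam : ℝ) (hT : 0 < T) (hC : 0 ≤ C) (hlam : 0 < lam)
    (A : H →ₗ[ℝ] H)
    (hA : ∀ x : H, (inner ℝ x (A x) : ℝ) ≤ -lam * ‖x‖ ^ 2)
    (g : ℝ → H → H)
    (hg : ∀ t ∈ Set.Icc (0:ℝ) T, ∀ a b : H, ‖g t a - g t b‖ ≤ C * ‖a - b‖)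
    (ε : ℝ → ℝ) (hεc : ContinuousOn ε (Set.Icc (0:ℝ) T))
    (hεnn : ∀ t ∈ Set.Icc (0:ℝ) T, 0 ≤ ε t)
    (u v v' : ℝ → H)
    (hu : ∀ t ∈ Set.Icc (0:ℝ) T,
      HasDerivWithinAt u (A (u t) + g t (u t)) (Set.Icc (0:ℝ) T) t)
    (hv : ∀ t ∈ Set.Icc (0:ℝ) T, HasDerivWithinAt v (v' t) (Set.Icc (0:ℝ) T) t)
    (hres : ∀ t ∈ Set.Icc (0:ℝ) T, ‖v' t - A (v t) - g t (v t)‖ ≤ ε t) :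
    ∀ t ∈ Set.Icc (0:ℝ) T,
      ‖u t - v t‖ ≤ Real.exp ((C - lam) * t) *
        (‖u 0 - v 0‖ + ∫ s in (0:ℝ)..t, Real.exp (-(C - lam) * s) * ε s) := by
  intro t ht
  set K := C - lam with hK
  set w : ℝ → H := fun s => u s - v s with hwdef
  set w' : ℝ → H := fun s => (A (u s) + g s (u s)) - v' s with hw'def
  have h0mem : (0:ℝ) ∈ Set.Icc (0:ℝ) T := ⟨le_refl _, hT.le⟩
  have hw : ∀ s ∈ Set.Icc (0:ℝ) T,
      HasDerivWithinAt w (w' s) (Set.Icc (0:ℝ) T) s :=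
    fun s hs => (hu s hs).sub (hv s hs)
  -- key inner product bound
  have hkey : ∀ s ∈ Set.Icc (0:ℝ) T,
      (inner ℝ (w s) (w' s) : ℝ) ≤ K * ‖w s‖ ^ 2 + ε s * ‖w s‖ := by
    intro s hs
    have hsplit : w' s = A (w s) + ((g s (u s) - g s (v s)) +
        -(v' s - A (v s) - g s (v s))) := by
      simp only [hwdef, hw'def, map_sub]
      abel
    rw [hsplit, inner_add_right, inner_add_right]
    have h1 : (inner ℝ (w s) (A (w s)) : ℝ) ≤ -lam * ‖w s‖ ^ 2 := hA _
    have h2 : (inner ℝ (w s) (g s (u s) - g s (v s)) : ℝ) ≤ ‖w s‖ * (C * ‖w s‖) := by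
      calc (inner ℝ (w s) (g s (u s) - g s (v s)) : ℝ)
          ≤ ‖w s‖ * ‖g s (u s) - g s (v s)‖ := real_inner_le_norm _ _
        _ ≤ ‖w s‖ * (C * ‖w s‖) := by
            exact mul_le_mul_of_nonneg_left (hg s hs (u s) (v s)) (norm_nonneg _)
    have h3 : (inner ℝ (w s) (-(v' s - A (v s) - g s (v s))) : ℝ) ≤ ‖w s‖ * ε s := by
      calc (inner ℝ (w s) (-(v' s - A (v s) - g s (v s))) : ℝ)
          ≤ ‖w s‖ * ‖-(v' s - A (v s) - g s (v s))‖ := real_inner_le_norm _ _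
        _ = ‖w s‖ * ‖v' s - A (v s) - g s (v s)‖ := by rw [norm_neg]
        _ ≤ ‖w s‖ * ε s := mul_le_mul_of_nonneg_left (hres s hs) (norm_nonneg _)
    nlinarith [norm_nonneg (w s)]
  -- the target integral and auxiliary quantities
  set Iε : ℝ := ∫ s in (0:ℝ)..t, Real.exp (-K * s) * ε s with hIε
  set I₀ : ℝ := ∫ s in (0:ℝ)..t, Real.exp (-K * s) with hI₀
  have hI₀nn : 0 ≤ I₀ := by
    apply intervalIntegral.integral_nonneg ht.1
    intro x _; positivity
  set M : ℝ := Real.exp (K * t) * (1 + |K| * I₀) with hM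
  have hMnn : 0 ≤ M := by positivity
  -- continuous extension of ε
  set εe : ℝ → ℝ := Set.IccExtend hT.le ((Set.Icc (0:ℝ) T).restrict ε) with hεe
  have hεecont : Continuous εe := (ContinuousOn.restrict hεc).Icc_extend'
  have hεeeq : ∀ s ∈ Set.Icc (0:ℝ) T, εe s = ε s := by
    intro s hs
    simp [hεe, Set.IccExtend_of_mem hT.le _ hs]
    rfl
  have hεenn : ∀ s, 0 ≤ εe s := by
    intro s
    exact hεnn _ (Set.projIcc 0 T hT.le s).2
  -- main estimate for each η > 0
  have main : ∀ η : ℝ, 0 < η →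
      ‖u t - v t‖ ≤ Real.exp (K * t) * (‖u 0 - v 0‖ + Iε) + η * M := by
    intro η hη
    set p : ℝ → ℝ := fun s => Real.sqrt (‖w s‖ ^ 2 + η ^ 2) with hpdef
    have hqpos : ∀ s, 0 < ‖w s‖ ^ 2 + η ^ 2 := fun s => by positivity
    have hppos : ∀ s, 0 < p s := fun s => Real.sqrt_pos.2 (hqpos s)
    have hp_lb : ∀ s, ‖w s‖ ≤ p s := by
      intro s
      rw [hpdef]
      nlinarith [Real.sq_sqrt (hqpos s).le, Real.sqrt_nonneg (‖w s‖ ^ 2 + η ^ 2),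
        norm_nonneg (w s)]
    have hp_eta : ∀ s, η ≤ p s := by
      intro s
      nlinarith [Real.sq_sqrt (hqpos s).le, Real.sqrt_nonneg (‖w s‖ ^ 2 + η ^ 2)]
    have hpsq : ∀ s, p s ^ 2 = ‖w s‖ ^ 2 + η ^ 2 := fun s => Real.sq_sqrt (hqpos s).le
    -- derivative of p
    have hp : ∀ s ∈ Set.Icc (0:ℝ) T,
        HasDerivWithinAt p ((inner ℝ (w s) (w' s) : ℝ) / p s) (Set.Icc (0:ℝ) T) s := by
      intro s hs
      have hq : HasDerivWithinAt (fun τ => (inner ℝ (w τ) (w τ) : ℝ) + η ^ 2)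
          ((inner ℝ (w s) (w' s) : ℝ) + (inner ℝ (w' s) (w s) : ℝ)) (Set.Icc (0:ℝ) T) s :=
        (((hw s hs).inner ℝ (hw s hs))).add_const _
      have hsq : HasDerivAt Real.sqrt
          (1 / (2 * Real.sqrt ((inner ℝ (w s) (w s) : ℝ) + η ^ 2)))
          ((inner ℝ (w s) (w s) : ℝ) + η ^ 2) := by
        apply Real.hasDerivAt_sqrt
        have := hqpos s
        rw [real_inner_self_eq_norm_sq]
        positivity
      have hcomp := hsq.comp_hasDerivWithinAt s hq
      have heq : (fun τ => Real.sqrt ((inner ℝ (w τ) (w τ) : ℝ) + η ^ 2)) = p := by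
        funext τ
        rw [hpdef, real_inner_self_eq_norm_sq]
      rw [Function.comp_def, heq] at hcomp
      refine hcomp.congr_deriv ?_
      rw [real_inner_self_eq_norm_sq, real_inner_comm (w' s) (w s)]
      have : Real.sqrt (‖w s‖ ^ 2 + η ^ 2) = p s := rfl
      rw [this]
      field_simp
      ring
    have hpcont : ContinuousOn p (Set.Icc (0:ℝ) T) :=
      fun s hs => (hp s hs).continuousWithinAt
    -- bound on the derivative of p
    have hpbd : ∀ s ∈ Set.Icc (0:ℝ) T,
        (inner ℝ (w s) (w' s) : ℝ) / p s ≤ K * p s + (ε s + |K| * η) := by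
      intro s hs
      rw [div_le_iff₀ (hppos s)]
      have h1 := hkey s hs
      have h2 := hpsq s
      have h3 := hp_lb s
      have h4 := hp_eta s
      have h5 := hεnn s hs
      have h6 := hppos s
      nlinarith [le_abs_self K, neg_abs_le K, abs_nonneg K, norm_nonneg (w s),
        mul_le_mul_of_nonneg_left h3 h5, mul_le_mul_of_nonneg_left h4 (abs_nonneg K)]
    -- the comparison function
    set h : ℝ → ℝ := fun τ => Real.exp (-K * τ) * (εe τ + |K| * η) with hhdef
    have hhcont : Continuous h := by
      apply Continuous.mul
      · exact (continuous_const.mul continuous_id).rexp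
      · exact hεecont.add continuous_const
    set G : ℝ → ℝ := fun s => Real.exp (-K * s) * p s - ∫ τ in (0:ℝ)..s, h τ with hGdef
    have hPrim : ∀ x : ℝ, HasDerivAt (fun s => ∫ τ in (0:ℝ)..s, h τ) (h x) x :=
      fun x => (hhcont.integral_hasStrictDerivAt 0 x).hasDerivAt
    have hPrimCont : Continuous (fun s => ∫ τ in (0:ℝ)..s, h τ) := by
      apply continuous_iff_continuousAt.2
      exact fun x => (hPrim x).continuousAt
    have hexp : ∀ x : ℝ, HasDerivAt (fun s => Real.exp (-K * s))
        (-K * Real.exp (-K * x)) x := by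
      intro x
      have := ((hasDerivAt_id x).const_mul (-K)).exp
      simpa [mul_comm] using this
    have hGcont : ContinuousOn G (Set.Icc (0:ℝ) T) := by
      apply ContinuousOn.sub
      · exact (((continuous_const.mul continuous_id).rexp).continuousOn).mul hpcont
      · exact hPrimCont.continuousOn
    -- derivative of G at interior points
    have hGderiv : ∀ x ∈ Set.Ioo (0:ℝ) T, HasDerivAt G
        ((-K * Real.exp (-K * x) * p x + Real.exp (-K * x) * ((inner ℝ (w x) (w' x) : ℝ) / p x))
          - h x) x := by
      intro x hx
      have hxIcc : x ∈ Set.Icc (0:ℝ) T := ⟨hx.1.le, hx.2.le⟩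
      have hpx : HasDerivAt p ((inner ℝ (w x) (w' x) : ℝ) / p x) x :=
        (hp x hxIcc).hasDerivAt (Icc_mem_nhds hx.1 hx.2)
      exact ((hexp x).mul hpx).sub (hPrim x)
    have hGd_nonpos : ∀ x ∈ Set.Ioo (0:ℝ) T,
        ((-K * Real.exp (-K * x) * p x + Real.exp (-K * x) * ((inner ℝ (w x) (w' x) : ℝ) / p x))
          - h x) ≤ 0 := by
      intro x hx
      have hxIcc : x ∈ Set.Icc (0:ℝ) T := ⟨hx.1.le, hx.2.le⟩
      have hb := hpbd x hxIcc
      have hee : εe x = ε x := hεeeq x hxIcc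
      have hepos : 0 < Real.exp (-K * x) := Real.exp_pos _
      have hhx : h x = Real.exp (-K * x) * (ε x + |K| * η) := by
        simp only [hhdef]; rw [hee]
      rw [hhx]
      nlinarith [mul_le_mul_of_nonneg_left hb hepos.le]
    -- G is antitone on [0, T]
    have hGanti : AntitoneOn G (Set.Icc (0:ℝ) T) := by
      apply antitoneOn_of_deriv_nonpos (convex_Icc 0 T) hGcont
      · intro x hx
        rw [interior_Icc] at hx
        exact (hGderiv x hx).differentiableAt.differentiableWithinAt
      · intro x hx
        rw [interior_Icc] at hx
        rw [(hGderiv x hx).deriv]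
        exact hGd_nonpos x hx
    have hGle : G t ≤ G 0 := hGanti h0mem ht ht.1
    have hG0 : G 0 = p 0 := by
      simp [hGdef]
    -- unfold G t
    have hstep : Real.exp (-K * t) * p t ≤ p 0 + ∫ τ in (0:ℝ)..t, h τ := by
      have := hGle
      rw [hG0] at this
      simp only [hGdef] at this
      linarith
    -- split the integral
    have hInt : (∫ τ in (0:ℝ)..t, h τ) = Iε + |K| * η * I₀ := by
      have hsub : Set.uIcc (0:ℝ) t ⊆ Set.Icc (0:ℝ) T := by
        rw [Set.uIcc_of_le ht.1]
        exact Set.Icc_subset_Icc le_rfl ht.2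
      have h1 : (∫ τ in (0:ℝ)..t, h τ)
          = (∫ τ in (0:ℝ)..t, (Real.exp (-K * τ) * ε τ + |K| * η * Real.exp (-K * τ))) := by
        apply intervalIntegral.integral_congr
        intro τ hτ
        have := hεeeq τ (hsub hτ)
        simp only [hhdef]
        rw [this]
        ring
      have hi1 : IntervalIntegrable (fun τ => Real.exp (-K * τ) * ε τ) MeasureTheory.volume 0 t := by
        apply ContinuousOn.intervalIntegrable
        apply ContinuousOn.mul
        · exact ((continuous_const.mul continuous_id).rexp).continuousOn
        · exact hεc.mono hsub
      have hi2 : IntervalIntegrable (fun τ => |K| * η * Real.exp (-K * τ)) MeasureTheory.volume 0 t := by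
        apply ContinuousOn.intervalIntegrable
        exact (continuous_const.mul ((continuous_const.mul continuous_id).rexp)).continuousOn
      rw [h1, intervalIntegral.integral_add hi1 hi2, intervalIntegral.integral_const_mul]
    have hp0 : p 0 ≤ ‖u 0 - v 0‖ + η := by
      have h1 : p 0 = Real.sqrt (‖w 0‖ ^ 2 + η ^ 2) := rfl
      have h2 : ‖w 0‖ = ‖u 0 - v 0‖ := rfl
      rw [h1, h2]
      nlinarith [Real.sq_sqrt (hqpos 0).le, Real.sqrt_nonneg (‖w 0‖ ^ 2 + η ^ 2),
        norm_nonneg (w 0), hη.le, h2,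
        sq_nonneg (‖w 0‖ + η - Real.sqrt (‖w 0‖ ^ 2 + η ^ 2))]
    -- finish
    have hExpMul : Real.exp (-K * t) * Real.exp (K * t) = 1 := by
      rw [← Real.exp_add]
      ring_nf
      exact Real.exp_zero
    have hwt : ‖u t - v t‖ ≤ p t := hp_lb t
    have hEpos : 0 < Real.exp (K * t) := Real.exp_pos _
    have hfinal : p t ≤ Real.exp (K * t) * (p 0 + Iε + |K| * η * I₀) := by
      have h1 : Real.exp (-K * t) * p t ≤ p 0 + Iε + |K| * η * I₀ := by
        rw [hInt] at hstep; linarith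
      calc p t = Real.exp (K * t) * (Real.exp (-K * t) * p t) := by
            rw [← mul_assoc, mul_comm (Real.exp (K * t)), hExpMul, one_mul]
        _ ≤ Real.exp (K * t) * (p 0 + Iε + |K| * η * I₀) :=
            mul_le_mul_of_nonneg_left h1 hEpos.le
    have : p t ≤ Real.exp (K * t) * (‖u 0 - v 0‖ + Iε) + η * M := by
      rw [hM]
      nlinarith [mul_le_mul_of_nonneg_left hp0 hEpos.le, abs_nonneg K]
    linarith
  -- take η → 0
  have hfin : ‖u t - v t‖ ≤ Real.exp (K * t) * (‖u 0 - v 0‖ + Iε) := by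
    apply le_of_forall_pos_le_add
    intro δ hδ
    have hηpos : 0 < δ / (M + 1) := by positivity
    have := main (δ / (M + 1)) hηpos
    have hle : δ / (M + 1) * M ≤ δ := by
      rw [div_mul_eq_mul_div, div_le_iff₀ (by linarith : (0:ℝ) < M + 1)]
      nlinarith
    linarith
  exact hfin
end

section
/- If v : ℝ → H is differentiable on [0,T] with v'(t) = P_{K(t)}(A (v t)) and v(t) ∈ K(t) for all t ∈ [0,T], then the norm is conserved: ‖v(t)‖ = ‖v(0)‖ for all t ∈ [0,T]. -/
/-- Norm conservation for continuous OtD dynamics with an anti-symmetric right-hand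
side operator, assuming the solution lies in the tangent space. -/
theorem otd_norm_conservation_antisymmetric
    {H : Type*} [NormedAddCommGroup H] [InnerProductSpace ℝ H] [CompleteSpace H]
    (T : ℝ) (hT : 0 < T)
    (K : ℝ → Submodule ℝ H) [∀ t, CompleteSpace (K t)]
    (A : H →ₗ[ℝ] H)
    (hA : ∀ w x : H, (inner ℝ w (A x) : ℝ) = -(inner ℝ (A w) x : ℝ))
    (v : ℝ → H)
    (hv : ∀ t ∈ Set.Icc (0:ℝ) T,
      HasDerivWithinAt v ((Submodule.orthogonalProjectionOnto (K t) (A (v t)) : H))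
        (Set.Icc (0:ℝ) T) t)
    (hmem : ∀ t ∈ Set.Icc (0:ℝ) T, v t ∈ K t) :
    ∀ t ∈ Set.Icc (0:ℝ) T, ‖v t‖ = ‖v 0‖ := by
  have h0 : (0:ℝ) ∈ Set.Icc (0:ℝ) T := ⟨le_refl _, hT.le⟩
  have hderiv : ∀ t ∈ Set.Icc (0:ℝ) T,
      HasDerivWithinAt (fun t => (inner ℝ (v t) (v t) : ℝ)) 0 (Set.Icc (0:ℝ) T) t := by
    intro t ht
    have h := (hv t ht).inner ℝ (hv t ht)
    have hproj : (inner ℝ (v t) ((Submodule.orthogonalProjectionOnto (K t) (A (v t)) : H)) : ℝ)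
        = inner ℝ (v t) (A (v t)) := by
      rw [Submodule.coe_orthogonalProjectionOnto_apply, ← Submodule.inner_starProjection_left_eq_right,
        Submodule.starProjection_eq_self_iff.2 (hmem t ht)]
    have hAz : (inner ℝ (v t) (A (v t)) : ℝ) = 0 := by
      have h1 := hA (v t) (v t)
      have h2 := real_inner_comm (A (v t)) (v t)
      linarith
    have hd0 : (inner ℝ (v t) ((Submodule.orthogonalProjectionOnto (K t) (A (v t)) : H))
        + inner ℝ ((Submodule.orthogonalProjectionOnto (K t) (A (v t)) : H)) (v t) : ℝ) = 0 := by
      have hsym : (inner ℝ ((Submodule.orthogonalProjectionOnto (K t) (A (v t)) : H)) (v t) : ℝ)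
          = inner ℝ (v t) ((Submodule.orthogonalProjectionOnto (K t) (A (v t)) : H)) :=
        real_inner_comm _ _
      rw [hsym, hproj, hAz]; ring
    exact hd0 ▸ h
  intro t ht
  have key : (inner ℝ (v t) (v t) : ℝ) = inner ℝ (v 0) (v 0) := by
    have := (convex_Icc (0:ℝ) T).norm_image_sub_le_of_norm_hasDerivWithin_le
      (C := 0) hderiv (fun x hx => by simp) h0 ht
    rw [zero_mul] at this
    have := le_antisymm this (norm_nonneg _)
    exact sub_eq_zero.1 (norm_eq_zero.1 this)
  have hsq : ‖v t‖ ^ 2 = ‖v 0‖ ^ 2 := by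
    simpa [real_inner_self_eq_norm_sq] using key
  nlinarith [norm_nonneg (v t), norm_nonneg (v 0), hsq]
end

section
/- If v : ℝ → H is differentiable on [0,T] with v'(t) = P_{K(t)}(A(v t) + g t (v t)) and v(t) ∈ K(t) for all t ∈ [0,T] (the parametrization satisfies the tangent-space condition that the current solution lies in its own tangent space), then for all t ∈ [0,T]: ‖v(t)‖ ≤ ‖v(0)‖ e^{(C−λ)t} + (C₀/(C−λ))(e^{(C−λ)t} − 1). -/
open Set Filter Real

/-- Norm stability of continuous OtD dynamics for right-hand sides with an unbounded
dissipative operator plus a bounded part, assuming the tangent-space condition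
(Proposition 3.4). -/
theorem otd_stability_dissipative
    {H : Type*} [NormedAddCommGroup H] [InnerProductSpace ℝ H] [CompleteSpace H]
    (T C C₀ lam : ℝ) (hT : 0 < T) (hC : 0 < C) (hC₀ : 0 < C₀) (hlam : 0 < lam)
    (hCne : C ≠ lam)
    (K : ℝ → Submodule ℝ H) [∀ t, CompleteSpace (K t)]
    (A : H →ₗ[ℝ] H)
    (hA : ∀ x : H, (inner ℝ x (A x) : ℝ) ≤ -lam * ‖x‖ ^ 2)
    (g : ℝ → H → H)
    (hg : ∀ t ∈ Set.Icc (0:ℝ) T, ∀ x : H, ‖g t x‖ ≤ C * ‖x‖ + C₀)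
    (v : ℝ → H)
    (hv : ∀ t ∈ Set.Icc (0:ℝ) T,
      HasDerivWithinAt v (((K t).orthogonalProjectionOnto (A (v t) + g t (v t)) : H))
        (Set.Icc (0:ℝ) T) t)
    (hmem : ∀ t ∈ Set.Icc (0:ℝ) T, v t ∈ K t) :
    ∀ t ∈ Set.Icc (0:ℝ) T,
      ‖v t‖ ≤ ‖v 0‖ * Real.exp ((C - lam) * t) +
        (C₀ / (C - lam)) * (Real.exp ((C - lam) * t) - 1) := by
  set Kc : ℝ := C - lam with hKc
  have hKne : Kc ≠ 0 := sub_ne_zero.mpr hCne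
  set w : ℝ → H := fun t => ((K t).orthogonalProjectionOnto (A (v t) + g t (v t)) : H) with hw
  -- key inner product identity and bound
  have hip : ∀ t ∈ Set.Icc (0:ℝ) T,
      (inner ℝ (v t) (w t) : ℝ) ≤ Kc * ‖v t‖ ^ 2 + C₀ * ‖v t‖ := by
    intro t ht
    have h1 : (inner ℝ (v t) (w t) : ℝ) = inner ℝ (v t) (A (v t) + g t (v t)) := by
      rw [hw]
      show inner ℝ (v t) ((K t).starProjection (A (v t) + g t (v t))) = _
      rw [← Submodule.inner_starProjection_left_eq_right,
        Submodule.starProjection_eq_self_iff.mpr (hmem t ht)]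
    rw [h1, inner_add_right]
    have h2 : (inner ℝ (v t) (g t (v t)) : ℝ) ≤ ‖v t‖ * (C * ‖v t‖ + C₀) := by
      calc (inner ℝ (v t) (g t (v t)) : ℝ) ≤ ‖v t‖ * ‖g t (v t)‖ := real_inner_le_norm _ _
        _ ≤ ‖v t‖ * (C * ‖v t‖ + C₀) := by
            exact mul_le_mul_of_nonneg_left (hg t ht _) (norm_nonneg _)
    have h3 := hA (v t)
    nlinarith [norm_nonneg (v t)]
  -- key estimate with regularization parameter s
  have key : ∀ s : ℝ, 0 < s → ∀ t ∈ Set.Icc (0:ℝ) T,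
      ‖v t‖ ≤ gronwallBound (‖v 0‖ + s) Kc (C₀ + |Kc| * s) t := by
    intro s hs
    set q : ℝ → ℝ := fun t => (inner ℝ (v t) (v t) : ℝ) + s ^ 2 with hq
    have hqpos : ∀ t, 0 < q t := by
      intro t
      have := real_inner_self_nonneg (x := v t)
      positivity
    have hqv : ∀ t, q t = ‖v t‖ ^ 2 + s ^ 2 := by
      intro t; rw [hq]; simp [real_inner_self_eq_norm_sq]
    set u : ℝ → ℝ := fun t => Real.sqrt (q t) with hu
    set F : ℝ → ℝ := fun t =>
      ((inner ℝ (v t) (w t) : ℝ) + (inner ℝ (w t) (v t) : ℝ)) / (2 * Real.sqrt (q t)) with hF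
    have hud : ∀ t ∈ Set.Icc (0:ℝ) T,
        HasDerivWithinAt u (F t) (Set.Icc (0:ℝ) T) t := by
      intro t ht
      have h1 : HasDerivWithinAt (fun t => (inner ℝ (v t) (v t) : ℝ))
          ((inner ℝ (v t) (w t) : ℝ) + (inner ℝ (w t) (v t) : ℝ)) (Set.Icc (0:ℝ) T) t :=
        (hv t ht).inner ℝ (hv t ht)
      exact (h1.add_const (s ^ 2)).sqrt (ne_of_gt (hqpos t))
    have husq : ∀ t, u t ^ 2 = q t := fun t => Real.sq_sqrt (hqpos t).le
    have hus : ∀ t, s ≤ u t := by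
      intro t
      have h1 : Real.sqrt (s ^ 2) ≤ Real.sqrt (q t) :=
        Real.sqrt_le_sqrt (by nlinarith [sq_nonneg ‖v t‖, hqv t])
      rwa [Real.sqrt_sq hs.le] at h1
    have hnu : ∀ t, ‖v t‖ ≤ u t := by
      intro t
      have h1 : Real.sqrt (‖v t‖ ^ 2) ≤ Real.sqrt (q t) :=
        Real.sqrt_le_sqrt (by nlinarith [hqv t, sq_nonneg s])
      rwa [Real.sqrt_sq (norm_nonneg _)] at h1
    have hupos : ∀ t, 0 < u t := fun t => lt_of_lt_of_le hs (hus t)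
    have main := le_gronwallBound_of_liminf_deriv_right_le (f := u) (f' := F)
      (δ := ‖v 0‖ + s) (K := Kc) (ε := C₀ + |Kc| * s) (a := 0) (b := T)
      (fun t ht => ((hud t ht).continuousWithinAt))
      (fun x hx r hr => by
        have hx' : x ∈ Set.Icc (0:ℝ) T := ⟨hx.1, hx.2.le⟩
        have hIci : HasDerivWithinAt u (F x) (Set.Ici x) x :=
          (hud x hx').mono_of_mem_nhdsWithin (Icc_mem_nhdsGE_of_mem hx)
        have := hIci.liminf_right_slope_le hr
        refine this.mono fun z hz => ?_
        rwa [slope_def_field, div_eq_inv_mul] at hz)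
      (by
        have : u 0 ≤ ‖v 0‖ + s := by
          rw [hu]
          have : Real.sqrt (q 0) ≤ Real.sqrt ((‖v 0‖ + s) ^ 2) := by
            apply Real.sqrt_le_sqrt
            rw [hqv 0]; nlinarith [norm_nonneg (v 0)]
          rwa [Real.sqrt_sq (by positivity)] at this
        exact this)
      (fun x hx => by
        have hx' : x ∈ Set.Icc (0:ℝ) T := ⟨hx.1, hx.2.le⟩
        have hip' := hip x hx'
        have hcom : (inner ℝ (w x) (v x) : ℝ) = inner ℝ (v x) (w x) := real_inner_comm _ _
        have hsq : Real.sqrt (q x) ≠ 0 := ne_of_gt (Real.sqrt_pos.mpr (hqpos x))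
        have h2 : F x = (inner ℝ (v x) (w x) : ℝ) / u x := by
          show ((inner ℝ (v x) (w x) : ℝ) + (inner ℝ (w x) (v x) : ℝ)) / (2 * Real.sqrt (q x))
            = (inner ℝ (v x) (w x) : ℝ) / Real.sqrt (q x)
          rw [hcom]
          field_simp
          ring
        rw [h2, div_le_iff₀ (hupos x)]
        have hu2 := husq x
        have hq2 := hqv x
        have hn := hnu x
        have hsu := hus x
        have habs1 : Kc ≤ |Kc| := le_abs_self Kc
        have habs2 : -Kc ≤ |Kc| := neg_le_abs Kc
        nlinarith [norm_nonneg (v x), hupos x, hC₀.le, mul_le_mul_of_nonneg_left hsu (abs_nonneg Kc)])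
    intro t ht
    have := main t ht
    rw [sub_zero] at this
    exact le_trans (hnu t) this
  -- pass to the limit s → 0
  intro t ht
  set R : ℝ := ‖v 0‖ * Real.exp (Kc * t) + C₀ / Kc * (Real.exp (Kc * t) - 1) with hR
  set B : ℝ := Real.exp (Kc * t) + |Kc| / Kc * (Real.exp (Kc * t) - 1) with hB
  have hBpos : 0 < B := by
    rcases lt_or_gt_of_ne hKne with hK | hK
    · have : |Kc| / Kc = -1 := by rw [abs_of_neg hK]; field_simp
      rw [hB, this]
      have := Real.exp_pos (Kc * t)
      nlinarith
    · have h1 : |Kc| / Kc = 1 := by rw [abs_of_pos hK]; field_simp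
      have h2 : (1:ℝ) ≤ Real.exp (Kc * t) := by
        rw [← Real.exp_zero]
        exact Real.exp_le_exp.mpr (by nlinarith [ht.1])
      rw [hB, h1]
      nlinarith
  have hle : ∀ s : ℝ, 0 < s → ‖v t‖ ≤ R + s * B := by
    intro s hs
    have := key s hs t ht
    rw [gronwallBound_of_K_ne_0 hKne] at this
    calc ‖v t‖ ≤ (‖v 0‖ + s) * Real.exp (Kc * t)
        + (C₀ + |Kc| * s) / Kc * (Real.exp (Kc * t) - 1) := this
      _ = R + s * B := by rw [hR, hB]; field_simp; ring
  have final : ‖v t‖ ≤ R := by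
    refine le_of_forall_pos_le_add fun ε hε => ?_
    have := hle (ε / B) (div_pos hε hBpos)
    rwa [div_mul_cancel₀ _ (ne_of_gt hBpos)] at this
  exact final
end

section
/- Let u, v : ℕ → H be two sequences, and for each k ∈ ℕ define the implicit-Euler defects e_k := u(k+1) − u(k) − δt • (A (u(k+1)) + g (k+1) (u(k+1))) (the time-integration error of the exact solution) and r_k := v(k+1) − v(k) − δt • (A (v(k+1)) + g (k+1) (v(k+1))) (the residual of the discretize-then-optimize solution with implicit Euler time discretization). Then for every k ∈ ℕ: ‖u(k) − v(k)‖ ≤ (1/(1 + (λ − C)δt))^k ‖u(0) − v(0)‖ + Σ_{i=0}^{k−1} (1/(1 + (λ − C)δt))^{k−i} ( ‖r_i‖ + ‖e_i‖ ). -/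
/-- A posteriori error bound for DtO schemes with implicit Euler time discretization
for a dissipative operator plus a Lipschitz part (Proposition 4.2). -/
theorem dto_aposteriori_implicit_euler
    {H : Type*} [NormedAddCommGroup H] [InnerProductSpace ℝ H]
    (δt C lam : ℝ) (hδt : 0 < δt) (hC : 0 ≤ C) (hlam : 0 < lam)
    (hpos : 1 + (lam - C) * δt > 0)
    (A : H →ₗ[ℝ] H)
    (hA : ∀ x : H, (inner ℝ x (A x) : ℝ) ≤ -lam * ‖x‖ ^ 2)
    (g : ℕ → H → H)
    (hg : ∀ k : ℕ, ∀ a b : H, ‖g k a - g k b‖ ≤ C * ‖a - b‖)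
    (u v e r : ℕ → H)
    (he : ∀ k : ℕ, e k = u (k + 1) - u k - δt • (A (u (k + 1)) + g (k + 1) (u (k + 1))))
    (hr : ∀ k : ℕ, r k = v (k + 1) - v k - δt • (A (v (k + 1)) + g (k + 1) (v (k + 1)))) :
    ∀ k : ℕ,
      ‖u k - v k‖ ≤ (1 / (1 + (lam - C) * δt)) ^ k * ‖u 0 - v 0‖ +
        ∑ i ∈ Finset.range k, (1 / (1 + (lam - C) * δt)) ^ (k - i) * (‖r i‖ + ‖e i‖) := by
  set P : ℝ := 1 + (lam - C) * δt with hP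
  set q : ℝ := 1 / P with hq
  have hq0 : 0 < q := by positivity
  have key : ∀ k, ‖u (k+1) - v (k+1)‖ ≤ q * (‖u k - v k‖ + (‖r k‖ + ‖e k‖)) := by
    intro k
    set x := u (k+1) - v (k+1) with hxd
    set y := u k - v k with hyd
    set G := g (k+1) (u (k+1)) - g (k+1) (v (k+1)) with hGd
    set d := e k - r k with hdd
    have hx : x = y + δt • A x + δt • G + d := by
      rw [hxd, hyd, hGd, hdd, he, hr]
      simp only [map_sub, smul_add, smul_sub]
      abel
    have expand : ‖x‖ ^ 2 = (inner ℝ x y : ℝ) + δt * inner ℝ x (A x) + δt * inner ℝ x G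
        + inner ℝ x d := by
      rw [← real_inner_self_eq_norm_sq]
      nth_rewrite 2 [hx]
      simp only [inner_add_right, real_inner_smul_right]
    have b1 : (inner ℝ x y : ℝ) ≤ ‖x‖ * ‖y‖ := real_inner_le_norm x y
    have b2 : (inner ℝ x (A x) : ℝ) ≤ -lam * ‖x‖ ^ 2 := hA x
    have hGnorm : ‖G‖ ≤ C * ‖x‖ := hg (k+1) _ _
    have b3 : (inner ℝ x G : ℝ) ≤ ‖x‖ * (C * ‖x‖) :=
      (real_inner_le_norm x G).trans (mul_le_mul_of_nonneg_left hGnorm (norm_nonneg x))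
    have hdnorm : ‖d‖ ≤ ‖r k‖ + ‖e k‖ := by
      rw [hdd]
      calc ‖e k - r k‖ ≤ ‖e k‖ + ‖r k‖ := norm_sub_le _ _
        _ = ‖r k‖ + ‖e k‖ := by ring
    have b4 : (inner ℝ x d : ℝ) ≤ ‖x‖ * (‖r k‖ + ‖e k‖) :=
      (real_inner_le_norm x d).trans (mul_le_mul_of_nonneg_left hdnorm (norm_nonneg x))
    have main : P * ‖x‖ ^ 2 ≤ ‖x‖ * (‖y‖ + (‖r k‖ + ‖e k‖)) := by
      rw [hP]; nlinarith [norm_nonneg x, hδt.le]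
    rcases eq_or_lt_of_le (norm_nonneg x) with h0 | h0
    · rw [← h0]
      positivity
    · have hS : P * ‖x‖ ≤ ‖y‖ + (‖r k‖ + ‖e k‖) :=
        le_of_mul_le_mul_right (by nlinarith [main]) h0
      calc ‖x‖ = q * (P * ‖x‖) := by rw [hq]; field_simp
        _ ≤ q * (‖y‖ + (‖r k‖ + ‖e k‖)) := mul_le_mul_of_nonneg_left hS hq0.le
  intro k
  induction k with
  | zero => simp
  | succ k ih =>
    have hsum : ∑ i ∈ Finset.range (k+1), q ^ (k+1-i) * (‖r i‖ + ‖e i‖)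
        = q * (∑ i ∈ Finset.range k, q ^ (k-i) * (‖r i‖ + ‖e i‖)) + q * (‖r k‖ + ‖e k‖) := by
      rw [Finset.sum_range_succ, Finset.mul_sum]
      congr 1
      · apply Finset.sum_congr rfl
        intro i hi
        have hik : i < k := Finset.mem_range.mp hi
        have : k + 1 - i = (k - i) + 1 := by omega
        rw [this, pow_succ]; ring
      · simp
    calc ‖u (k+1) - v (k+1)‖ ≤ q * (‖u k - v k‖ + (‖r k‖ + ‖e k‖)) := key k
      _ ≤ q * ((q ^ k * ‖u 0 - v 0‖ +
            ∑ i ∈ Finset.range k, q ^ (k-i) * (‖r i‖ + ‖e i‖)) + (‖r k‖ + ‖e k‖)) := by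
          apply mul_le_mul_of_nonneg_left _ hq0.le
          exact add_le_add_left ih _
      _ = q ^ (k+1) * ‖u 0 - v 0‖ +
            (q * (∑ i ∈ Finset.range k, q ^ (k-i) * (‖r i‖ + ‖e i‖)) + q * (‖r k‖ + ‖e k‖)) := by
          rw [pow_succ]; ring
      _ = q ^ (k+1) * ‖u 0 - v 0‖ +
            ∑ i ∈ Finset.range (k+1), q ^ (k+1-i) * (‖r i‖ + ‖e i‖) := by rw [hsum]
end

section
/- Let v : ℕ → H be a sequence and w : ℕ → H satisfy ‖w k‖ ≤ C‖v k‖ + C₀ for all k ∈ ℕ. Suppose the stationary-point condition of the discretize-then-optimize scheme with explicit Euler discretization holds: ⟪v(k+1), v(k+1) − v(k) − δt • w k⟫ = 0 for all k ∈ ℕ. Then, with Q := (1 + 2C²δt/ε)/(1 − εδt), for every k ∈ ℕ: ‖v(k)‖² ≤ Q^k ‖v(0)‖² + (Q^k − 1) · 2C₀²/(2C² + ε²). -/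
/-- Stability of stationary points of DtO schemes with explicit Euler discretization
(Proposition 4.3). -/
theorem dto_stationary_stability_explicit
    {H : Type*} [NormedAddCommGroup H] [InnerProductSpace ℝ H]
    (δt C C₀ ε : ℝ) (hδt : 0 < δt) (hC : 0 < C) (hC₀ : 0 < C₀) (hε : 0 < ε)
    (hεδt : 1 - ε * δt > 0)
    (v w : ℕ → H)
    (hw : ∀ k : ℕ, ‖w k‖ ≤ C * ‖v k‖ + C₀)
    (hstat : ∀ k : ℕ, (inner ℝ (v (k + 1)) (v (k + 1) - v k - δt • w k) : ℝ) = 0) :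
    ∀ k : ℕ,
      ‖v k‖ ^ 2 ≤ ((1 + 2 * C ^ 2 * δt / ε) / (1 - ε * δt)) ^ k * ‖v 0‖ ^ 2 +
        (((1 + 2 * C ^ 2 * δt / ε) / (1 - ε * δt)) ^ k - 1) *
          (2 * C₀ ^ 2 / (2 * C ^ 2 + ε ^ 2)) := by
  set Q : ℝ := (1 + 2 * C ^ 2 * δt / ε) / (1 - ε * δt) with hQdef
  set M : ℝ := 2 * C₀ ^ 2 / (2 * C ^ 2 + ε ^ 2) with hMdef
  have hQ1 : 1 ≤ Q := by
    rw [hQdef, le_div_iff₀ hεδt]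
    have : 0 < 2 * C ^ 2 * δt / ε := by positivity
    nlinarith
  -- per-step estimate
  have step : ∀ k : ℕ, ‖v (k + 1)‖ ^ 2 ≤ Q * ‖v k‖ ^ 2 + (Q - 1) * M := by
    intro k
    set a := ‖v (k + 1)‖ with ha
    set b := ‖v k‖ with hb
    set c := ‖w k‖ with hc
    have ha0 : 0 ≤ a := norm_nonneg _
    have hb0 : 0 ≤ b := norm_nonneg _
    have hc0 : 0 ≤ c := norm_nonneg _
    have h1 : a ^ 2 = (inner ℝ (v (k+1)) (v k) : ℝ) + δt * (inner ℝ (v (k+1)) (w k) : ℝ) := by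
      have := hstat k
      rw [inner_sub_right, inner_sub_right, inner_smul_right] at this
      have hself : (inner ℝ (v (k+1)) (v (k+1)) : ℝ) = a ^ 2 := by
        rw [real_inner_self_eq_norm_sq]
      linarith
    have h2 : (inner ℝ (v (k+1)) (v k) : ℝ) ≤ a * b := real_inner_le_norm _ _
    have h3 : (inner ℝ (v (k+1)) (w k) : ℝ) ≤ a * c := real_inner_le_norm _ _
    have h4 : c ≤ C * b + C₀ := hw k
    -- polynomial form: ε*(1-ε*δt)*a^2 ≤ (ε + 2*C^2*δt)*b^2 + 2*C₀^2*δt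
    have hpoly : ε * (1 - ε * δt) * a ^ 2 ≤ (ε + 2 * C ^ 2 * δt) * b ^ 2 + 2 * C₀ ^ 2 * δt := by
      nlinarith [mul_le_mul_of_nonneg_left h2 hε.le,
        mul_le_mul_of_nonneg_left h3 (mul_pos hε hδt).le,
        mul_nonneg hε.le (sq_nonneg (a - b)),
        mul_nonneg hδt.le (sq_nonneg (ε * a - c)),
        mul_nonneg hδt.le (sq_nonneg (C * b - C₀)),
        mul_le_mul_of_nonneg_left (mul_self_le_mul_self hc0 h4) hδt.le]
    have hden : 0 < ε * (1 - ε * δt) := mul_pos hε hεδt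
    have hCe : (0:ℝ) < 2 * C ^ 2 + ε ^ 2 := by positivity
    have key : Q * b ^ 2 + (Q - 1) * M
        = ((ε + 2 * C ^ 2 * δt) * b ^ 2 + 2 * C₀ ^ 2 * δt) / (ε * (1 - ε * δt)) := by
      rw [hQdef, hMdef]
      rw [div_sub_one hεδt.ne']
      field_simp
      ring
    rw [key, le_div_iff₀ hden]
    nlinarith [hpoly]
  -- induction
  intro k
  induction k with
  | zero => simp
  | succ n ih =>
      have hQ0 : 0 < Q := lt_of_lt_of_le one_pos hQ1
      have hM0 : 0 ≤ M := by rw [hMdef]; positivity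
      calc ‖v (n + 1)‖ ^ 2 ≤ Q * ‖v n‖ ^ 2 + (Q - 1) * M := step n
        _ ≤ Q * (Q ^ n * ‖v 0‖ ^ 2 + (Q ^ n - 1) * M) + (Q - 1) * M := by
            have := mul_le_mul_of_nonneg_left ih hQ0.le
            linarith
        _ = Q ^ (n + 1) * ‖v 0‖ ^ 2 + (Q ^ (n + 1) - 1) * M := by ring
end

section
/- Let v, v₊, w ∈ H satisfy the one-step stationarity relation ⟪v₊, v₊ − v⟫ = δt ⟪v₊, w⟫ and the growth bound ‖w‖ ≤ C‖v‖ + C₀. Then ‖v₊‖² ≤ (1/(1 − εδt)) ( (1 + 2C²δt/ε) ‖v‖² + 2C₀²δt/ε ). -/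
/-- One-step stability estimate for stationary points of DtO schemes. -/
theorem dto_stationary_one_step
    {H : Type*} [NormedAddCommGroup H] [InnerProductSpace ℝ H]
    (δt C C₀ ε : ℝ) (hδt : 0 < δt) (hC : 0 < C) (hC₀ : 0 < C₀) (hε : 0 < ε)
    (hεδt : 1 - ε * δt > 0)
    (v vnext w : H)
    (hstat : (inner ℝ vnext (vnext - v) : ℝ) = δt * (inner ℝ vnext w : ℝ))
    (hw : ‖w‖ ≤ C * ‖v‖ + C₀) :
    ‖vnext‖ ^ 2 ≤ (1 / (1 - ε * δt)) *
      ((1 + 2 * C ^ 2 * δt / ε) * ‖v‖ ^ 2 + 2 * C₀ ^ 2 * δt / ε) := by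
  have h1 : ‖vnext‖ ^ 2 ≤ ‖vnext‖ * ‖v‖ + δt * (‖vnext‖ * ‖w‖) := by
    have e : (inner ℝ vnext vnext : ℝ) - inner ℝ vnext v = δt * inner ℝ vnext w := by
      rw [← inner_sub_right]; exact hstat
    have hs : (inner ℝ vnext vnext : ℝ) = ‖vnext‖ ^ 2 := real_inner_self_eq_norm_sq _
    have h2 := real_inner_le_norm vnext v
    have h3 := real_inner_le_norm vnext w
    nlinarith [hδt.le]
  rw [one_div, inv_mul_eq_div, le_div_iff₀ hεδt]
  have hw2 : ‖w‖ * ‖w‖ ≤ (C * ‖v‖ + C₀) * (C * ‖v‖ + C₀) :=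
    mul_self_le_mul_self (norm_nonneg w) hw
  have key : ε * (‖vnext‖ ^ 2 * (1 - ε * δt)) ≤
      ε * ((1 + 2 * C ^ 2 * δt / ε) * ‖v‖ ^ 2 + 2 * C₀ ^ 2 * δt / ε) := by
    have e1 : ε * (2 * C ^ 2 * δt / ε) = 2 * C ^ 2 * δt := by field_simp
    have e2 : ε * (2 * C₀ ^ 2 * δt / ε) = 2 * C₀ ^ 2 * δt := by field_simp
    nlinarith [sq_nonneg (‖vnext‖ - ‖v‖), sq_nonneg (ε * ‖vnext‖ - ‖w‖),
      sq_nonneg (C * ‖v‖ - C₀), mul_pos hδt hε, hδt.le, hε.le,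
      mul_nonneg hδt.le (mul_nonneg (norm_nonneg vnext) (norm_nonneg w))]
  exact le_of_mul_le_mul_left key hε
end

section
/- Let v : ℕ → H be a sequence and w : ℕ → H satisfy ‖w k‖ ≤ C‖v k‖ + C₀ for all k ∈ ℕ. Suppose the stationary-point condition of the discretize-then-optimize scheme with implicit treatment of A and explicit treatment of the bounded part holds: ⟪v(k+1), v(k+1) − v(k) − δt • A (v(k+1)) − δt • w k⟫ = 0 for all k ∈ ℕ. Then, with Q := (1 + 2C²δt/ε)/(1 − εδt), for every k ∈ ℕ: ‖v(k)‖² ≤ Q^k ‖v(0)‖² + (Q^k − 1) · 2C₀²/(2C² + ε²). -/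
/-- Stability of stationary points of DtO schemes with implicit treatment of the
dissipative operator `A` and explicit treatment of the bounded part
(Proposition 4.4). -/
theorem dto_stationary_stability_imex
    {H : Type*} [NormedAddCommGroup H] [InnerProductSpace ℝ H]
    (δt C C₀ ε : ℝ) (hδt : 0 < δt) (hC : 0 < C) (hC₀ : 0 < C₀) (hε : 0 < ε)
    (hεδt : 1 - ε * δt > 0)
    (A : H →ₗ[ℝ] H)
    (hA : ∀ x : H, (inner ℝ x (A x) : ℝ) ≤ 0)
    (v w : ℕ → H)
    (hw : ∀ k : ℕ, ‖w k‖ ≤ C * ‖v k‖ + C₀)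
    (hstat : ∀ k : ℕ,
      (inner ℝ (v (k + 1)) (v (k + 1) - v k - δt • A (v (k + 1)) - δt • w k) : ℝ) = 0) :
    ∀ k : ℕ,
      ‖v k‖ ^ 2 ≤ ((1 + 2 * C ^ 2 * δt / ε) / (1 - ε * δt)) ^ k * ‖v 0‖ ^ 2 +
        (((1 + 2 * C ^ 2 * δt / ε) / (1 - ε * δt)) ^ k - 1) *
          (2 * C₀ ^ 2 / (2 * C ^ 2 + ε ^ 2)) := by
  set Q : ℝ := (1 + 2 * C ^ 2 * δt / ε) / (1 - ε * δt) with hQdef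
  set D : ℝ := 2 * C₀ ^ 2 / (2 * C ^ 2 + ε ^ 2) with hDdef
  have hden : 0 < ε * (1 - ε * δt) := mul_pos hε hεδt
  have hden2 : 0 < 2 * C ^ 2 + ε ^ 2 := by positivity
  -- key energy estimate
  have key : ∀ k : ℕ, ε * (1 - ε * δt) * ‖v (k + 1)‖ ^ 2 ≤
      (ε + 2 * C ^ 2 * δt) * ‖v k‖ ^ 2 + 2 * C₀ ^ 2 * δt := by
    intro k
    have h0 := hstat k
    rw [inner_sub_right, inner_sub_right, inner_sub_right, real_inner_smul_right,
      real_inner_smul_right, real_inner_self_eq_norm_sq] at h0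
    have hcs1 : (inner ℝ (v (k + 1)) (v k) : ℝ) ≤ ‖v (k + 1)‖ * ‖v k‖ := real_inner_le_norm _ _
    have hcs2 : (inner ℝ (v (k + 1)) (w k) : ℝ) ≤ ‖v (k + 1)‖ * ‖w k‖ := real_inner_le_norm _ _
    have hAk := hA (v (k + 1))
    have hb : (0:ℝ) ≤ ‖v (k + 1)‖ := norm_nonneg _
    have ha : (0:ℝ) ≤ ‖v k‖ := norm_nonneg _
    have h1 : (inner ℝ (v (k + 1)) (w k) : ℝ) ≤ ‖v (k + 1)‖ * (C * ‖v k‖ + C₀) :=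
      le_trans hcs2 (mul_le_mul_of_nonneg_left (hw k) hb)
    have h2 : δt * (inner ℝ (v (k + 1)) ((A (v (k + 1))) : H) : ℝ) ≤ 0 :=
      mul_nonpos_of_nonneg_of_nonpos hδt.le hAk
    -- b² ≤ ab + δt·b·(C a + C₀)
    have hmain : ‖v (k + 1)‖ ^ 2 ≤ ‖v (k + 1)‖ * ‖v k‖ +
        δt * (‖v (k + 1)‖ * (C * ‖v k‖ + C₀)) := by
      have h3 : δt * (inner ℝ (v (k + 1)) (w k) : ℝ) ≤
          δt * (‖v (k + 1)‖ * (C * ‖v k‖ + C₀)) :=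
        mul_le_mul_of_nonneg_left h1 hδt.le
      nlinarith [h0, h2, h3, hcs1]
    nlinarith [mul_nonneg hε.le (sq_nonneg (‖v k‖ - ‖v (k + 1)‖)),
      mul_nonneg hδt.le (sq_nonneg (ε * ‖v (k + 1)‖ - 2 * C * ‖v k‖)),
      mul_nonneg hδt.le (sq_nonneg (ε * ‖v (k + 1)‖ - 2 * C₀)),
      mul_le_mul_of_nonneg_left hmain (by positivity : (0:ℝ) ≤ 2 * ε)]
  -- one-step recursion
  have hstep : ∀ k : ℕ, ‖v (k + 1)‖ ^ 2 ≤ Q * ‖v k‖ ^ 2 + (Q - 1) * D := by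
    intro k
    rw [← mul_le_mul_iff_of_pos_right hden]
    have heq : (Q * ‖v k‖ ^ 2 + (Q - 1) * D) * (ε * (1 - ε * δt)) =
        (ε + 2 * C ^ 2 * δt) * ‖v k‖ ^ 2 + 2 * C₀ ^ 2 * δt := by
      have hq : Q * (1 - ε * δt) = 1 + 2 * C ^ 2 * δt / ε := div_mul_cancel₀ _ hεδt.ne'
      have hd : D * (2 * C ^ 2 + ε ^ 2) = 2 * C₀ ^ 2 := div_mul_cancel₀ _ hden2.ne'
      have hε' : ε * (2 * C ^ 2 * δt / ε) = 2 * C ^ 2 * δt := mul_div_cancel₀ _ hε.ne'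
      linear_combination (ε * (‖v k‖ ^ 2 + D)) * hq + (‖v k‖ ^ 2 + D) * hε' + δt * hd
    rw [heq]
    have := key k
    linarith
  have hQ1 : 1 < Q := by
    rw [hQdef, lt_div_iff₀ hεδt]
    have h4 : 0 < 2 * C ^ 2 * δt / ε := by positivity
    nlinarith [mul_pos hε hδt]
  have hQ0 : 0 < Q := lt_trans one_pos hQ1
  have hmain : ∀ k : ℕ, ‖v k‖ ^ 2 + D ≤ Q ^ k * (‖v 0‖ ^ 2 + D) := by
    intro k
    induction k with
    | zero => simp
    | succ n ih =>
      have h5 := hstep n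
      have h6 : Q * (‖v n‖ ^ 2 + D) ≤ Q * (Q ^ n * (‖v 0‖ ^ 2 + D)) :=
        mul_le_mul_of_nonneg_left ih hQ0.le
      calc ‖v (n + 1)‖ ^ 2 + D ≤ Q * (‖v n‖ ^ 2 + D) := by linarith
        _ ≤ Q * (Q ^ n * (‖v 0‖ ^ 2 + D)) := h6
        _ = Q ^ (n + 1) * (‖v 0‖ ^ 2 + D) := by ring
  intro k
  have := hmain k
  nlinarith [this]
end

section
/- Define the DtO explicit-Euler residual r : P → H by r(θ) = û(θ) − û(θ₀) − δt • f. Then: (i) r is differentiable at θ₀ with Fréchet derivative D at θ₀ and r(θ₀) = −δt • f; and (ii) for every θ ∈ P, the single Gauss–Newton step equation from initialization θ₀ with unit step size, namely ⟪D η, D(θ − θ₀)⟫ = −⟪D η, r(θ₀)⟫ for all η ∈ P, holds if and only if θ satisfies the explicit-Euler optimize-then-discretize normal equations ⟪D η, D(θ − θ₀)⟫ = δt ⟪D η, f⟫ for all η ∈ P. Hence a parameter trajectory obtained by applying a single Gauss–Newton iteration per time step to the explicit-Euler DtO regression problem satisfies the explicit-Euler discretization of the OtD first-order optimality conditions. 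-/
/-- OtD as a first-order approximation of DtO: a single Gauss–Newton step with unit
step size applied to the explicit-Euler DtO regression problem yields exactly the
explicit-Euler OtD normal equations (Proposition 5.1). -/
theorem dto_one_step_gauss_newton_is_otd
    {P H : Type*} [NormedAddCommGroup P] [InnerProductSpace ℝ P]
    [FiniteDimensional ℝ P]
    [NormedAddCommGroup H] [InnerProductSpace ℝ H] [CompleteSpace H]
    (δt : ℝ) (hδt : 0 < δt) (θ₀ : P)
    (uhat : P → H) (D : P →L[ℝ] H) (hD : HasFDerivAt uhat D θ₀) (f : H)
    (r : P → H) (hrdef : ∀ θ : P, r θ = uhat θ - uhat θ₀ - δt • f) :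
    (HasFDerivAt r D θ₀ ∧ r θ₀ = -(δt • f)) ∧
    ∀ θ : P,
      ((∀ η : P, (inner ℝ (D η) (D (θ - θ₀)) : ℝ) = -(inner ℝ (D η) (r θ₀) : ℝ)) ↔
        (∀ η : P, (inner ℝ (D η) (D (θ - θ₀)) : ℝ) = δt * (inner ℝ (D η) f : ℝ))) := by
  have hr0 : r θ₀ = -(δt • f) := by simp [hrdef]
  refine ⟨⟨?_, hr0⟩, ?_⟩
  · have : r = fun θ => uhat θ - (uhat θ₀ + δt • f) := by
      funext θ; rw [hrdef]; abel
    rw [this]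
    simpa using hD.sub_const (uhat θ₀ + δt • f)
  · intro θ
    constructor <;> intro h η <;> have := h η <;>
      simpa [hr0, inner_neg_right, inner_smul_right] using this
end
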